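/- If the Banach algebra 𝒦(X) of compact operators on a real Banach space X has a λ-bounded right approximate identity (λ-BRAI), then X has the λ-bounded compact approximation property (λ-BCAP). -/

import Mathlib

set_option maxSynthPendingDepth 3

open Filter Topology Metric NormedSpace Function

/-- `u` is a finite-rank operator: its range is finite-dimensional. -/
def FinRankOp {X Y : Type*} [NormedAddCommGroup X] [NormedSpace ℝ X]
    [NormedAddCommGroup Y] [NormedSpace ℝ Y] (u : X →L[ℝ] Y) : Prop :=
  FiniteDimensional ℝ (LinearMap.range (u : X →ₗ[ℝ] Y))

/-- `u` is approximable: a limit in operator norm of finite-rank operators. -/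
def ApproxOp {X Y : Type*} [NormedAddCommGroup X] [NormedSpace ℝ X]
    [NormedAddCommGroup Y] [NormedSpace ℝ Y] (u : X →L[ℝ] Y) : Prop :=
  u ∈ closure {f : X →L[ℝ] Y | FinRankOp f}

/-- `u` is a compact operator: it maps the closed unit ball to a relatively compact set. -/
def CompactOp {X Y : Type*} [NormedAddCommGroup X] [NormedSpace ℝ X]
    [NormedAddCommGroup Y] [NormedSpace ℝ Y] (u : X →L[ℝ] Y) : Prop :=
  IsCompact (closure (u '' Metric.closedBall 0 1))

/-- `Y` has the λ-bounded compact approximation property (λ-BCAP). -/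
def HasBCAP (Y : Type*) [NormedAddCommGroup Y] [NormedSpace ℝ Y] (l : ℝ) : Prop :=
  ∀ K : Set Y, IsCompact K → ∀ ε : ℝ, 0 < ε →
    ∃ u : Y →L[ℝ] Y, CompactOp u ∧ ‖u‖ ≤ l ∧ ∀ x ∈ K, ‖u x - x‖ < ε

/-- The Banach algebra 𝒦(X) of compact operators on `X` has a λ-bounded right approximate
identity: a net `(e i)` of compact operators with `‖e i‖ ≤ λ` such that
`‖x * e i - x‖ → 0` for every compact operator `x` (multiplication is composition). -/
def CompactAlgHasBRAI (X : Type u) [NormedAddCommGroup X] [NormedSpace ℝ X] (l : ℝ) : Prop :=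
  ∃ (ι : Type u) (_ : Preorder ι) (_ : Nonempty ι) (_ : IsDirected ι (· ≤ ·))
    (e : ι → X →L[ℝ] X),
    (∀ i, CompactOp (e i) ∧ ‖e i‖ ≤ l) ∧
    ∀ x : X →L[ℝ] X, CompactOp x →
      Tendsto (fun i => ‖x.comp (e i) - x‖) atTop (𝓝 (0 : ℝ))


/-!
Testing the approximate identity `(eᵢ)` against the rank-one compact operators `f ⊗ x` gives
`f (eᵢ x) → f x`, so `eᵢ → 1` in the weak operator topology. For a finite set `s ⊆ X` this is weak
convergence of `(eᵢ y)_{y ∈ s}` to `(y)_{y ∈ s}` in `X^s`, so by Hahn–Banach (Mazur) convex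
combinations of the `eᵢ`, which are still compact of norm `≤ λ`, approximate the identity in norm
on `s`. The uniform bound `λ` then passes from finite δ-nets to compact sets.
-/

open Set Bornology

theorem compactOp_iff_isCompactOperator {X Y : Type*} [NormedAddCommGroup X] [NormedSpace ℝ X]
    [NormedAddCommGroup Y] [NormedSpace ℝ Y] (u : X →L[ℝ] Y) :
    CompactOp u ↔ IsCompactOperator u :=
  (isCompactOperator_iff_isCompact_closure_image_closedBall (u : X →ₗ[ℝ] Y) one_pos).symm

section

variable {E : Type*} [NormedAddCommGroup E] [NormedSpace ℝ E]

theorem compactOp_smulRight (f : StrongDual ℝ E) (z : E) : CompactOp (f.smulRight z) :=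
  (compactOp_iff_isCompactOperator _).2 <|
    (isCompactOperator_of_locallyCompactSpace_rng ((1 : ℝ →L[ℝ] ℝ).smulRight z)).comp_clm f

theorem convex_setOf_compactOp_norm_le {F : Type*} [NormedAddCommGroup F] [NormedSpace ℝ F]
    (l : ℝ) : Convex ℝ {u : E →L[ℝ] F | CompactOp u ∧ ‖u‖ ≤ l} := by
  have : {u : E →L[ℝ] F | CompactOp u ∧ ‖u‖ ≤ l} =
      (compactOperator (RingHom.id ℝ) E F : Set (E →L[ℝ] F)) ∩ Metric.closedBall 0 l := by
    ext u
    simp [compactOp_iff_isCompactOperator, compactOperator]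
  exact this ▸ (Submodule.convex _).inter (convex_closedBall 0 l)

theorem tendsto_dual_apply_of_tendsto_smulRight_comp {ι : Type*} {L : Filter ι}
    {e : ι → E →L[ℝ] E} (f : StrongDual ℝ E) (x : E)
    (h : Tendsto (fun i => ‖(f.smulRight x).comp (e i) - f.smulRight x‖) L (𝓝 0)) :
    Tendsto (fun i => f (e i x)) L (𝓝 (f x)) := by
  rcases eq_or_ne x 0 with rfl | hx
  · exact tendsto_const_nhds.congr fun i => by simp
  set T := f.smulRight x
  have hbound : ∀ i, |f (e i x) - f x| ≤ ‖T.comp (e i) - T‖ := fun i => by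
    have happly : (T.comp (e i) - T) x = (f (e i x) - f x) • x := by simp [T, sub_smul]
    have hle := (T.comp (e i) - T).le_opNorm x
    rw [happly, norm_smul, Real.norm_eq_abs] at hle
    exact le_of_mul_le_mul_right hle (norm_pos_iff.2 hx)
  rw [tendsto_iff_norm_sub_tendsto_zero]
  exact squeeze_zero (fun _ => norm_nonneg _) hbound h

theorem mem_closure_convexHull_range_of_tendsto_dual {F : Type*} [AddCommGroup F]
    [TopologicalSpace F] [Module ℝ F] [IsTopologicalAddGroup F] [ContinuousSMul ℝ F]
    [LocallyConvexSpace ℝ F] {ι : Type*} {L : Filter ι} [L.NeBot] {v : ι → F} {x : F}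
    (h : ∀ f : StrongDual ℝ F, Tendsto (fun i => f (v i)) L (𝓝 (f x))) :
    x ∈ closure (convexHull ℝ (range v)) := by
  by_contra hx
  obtain ⟨f, c, hlt, hgt⟩ :=
    geometric_hahn_banach_closed_point (convex_convexHull ℝ _).closure isClosed_closure hx
  have hle : f x ≤ c := le_of_tendsto (h f) <| Eventually.of_forall fun i =>
    (hlt _ (subset_closure (subset_convexHull ℝ _ (mem_range_self i)))).le
  linarith

theorem tendsto_dual_pi {κ ι : Type*} [Fintype κ] {L : Filter ι} {v : ι → κ → E} {x : κ → E}
    (h : ∀ k (f : StrongDual ℝ E), Tendsto (fun i => f (v i k)) L (𝓝 (f (x k))))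
    (F : StrongDual ℝ (κ → E)) : Tendsto (fun i => F (v i)) L (𝓝 (F x)) := by
  classical
  simp_rw [← F.sum_comp_single]
  exact tendsto_finsetSum _ fun k _ => h k _

def ApproxIdOn (S : Set (E →L[ℝ] E)) (K : Set E) : Prop :=
  ∀ ε > 0, ∃ u ∈ S, ∀ x ∈ K, ‖u x - x‖ < ε

theorem ApproxIdOn.mono {S T : Set (E →L[ℝ] E)} {K : Set E} (h : ApproxIdOn S K) (hST : S ⊆ T) :
    ApproxIdOn T K := fun ε hε =>
  let ⟨u, hu, hK⟩ := h ε hε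
  ⟨u, hST hu, hK⟩

theorem approxIdOn_convexHull_range_of_tendsto_dual {ι : Type*} {L : Filter ι} [L.NeBot]
    {e : ι → E →L[ℝ] E} (h : ∀ (f : StrongDual ℝ E) x, Tendsto (fun i => f (e i x)) L (𝓝 (f x)))
    (s : Finset E) : ApproxIdOn (convexHull ℝ (range e)) s := by
  let Φ : (E →L[ℝ] E) →ₗ[ℝ] (s → E) :=
    LinearMap.pi fun y => (ContinuousLinearMap.apply ℝ E (y : E)).toLinearMap
  have hmem : (fun y : s => (y : E)) ∈ closure (convexHull ℝ (range (Φ ∘ e))) :=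
    mem_closure_convexHull_range_of_tendsto_dual (tendsto_dual_pi fun y f => h f y)
  rw [range_comp, ← Φ.image_convexHull] at hmem
  intro ε hε
  obtain ⟨_, ⟨u, hu, rfl⟩, hdist⟩ := Metric.mem_closure_iff.mp hmem ε hε
  refine ⟨u, hu, fun y hy => ?_⟩
  calc ‖u y - y‖ = dist (Φ u ⟨y, hy⟩) y := (dist_eq_norm (Φ u ⟨y, hy⟩) (y : E)).symm
    _ ≤ dist (Φ u) (fun y : s => (y : E)) :=
      dist_le_pi_dist (Φ u) (fun y : s => (y : E)) ⟨y, hy⟩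
    _ < ε := by rwa [dist_comm]

theorem norm_apply_sub_self_lt_of_dist_lt {u : E →L[ℝ] E} {x y : E} {δ η : ℝ}
    (hxy : dist x y < δ) (hy : ‖u y - y‖ < η) : ‖u x - x‖ < (‖u‖ + 1) * δ + η :=
  calc ‖u x - x‖ = ‖u (x - y) + (u y - y) + (y - x)‖ := by rw [map_sub]; abel_nf
    _ ≤ ‖u (x - y)‖ + ‖u y - y‖ + ‖y - x‖ := norm_add₃_le
    _ < ‖u‖ * δ + η + δ := by
      rw [dist_eq_norm] at hxy
      refine add_lt_add (add_lt_add_of_le_of_lt ?_ hy) (by rwa [norm_sub_rev])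
      exact (u.le_opNorm _).trans (by gcongr)
    _ = (‖u‖ + 1) * δ + η := by ring

theorem approxIdOn_of_isCompact {S : Set (E →L[ℝ] E)} (hS : IsBounded S)
    (hfin : ∀ s : Finset E, ApproxIdOn S s) {K : Set E} (hK : IsCompact K) : ApproxIdOn S K := by
  intro ε hε
  obtain ⟨R, hR, hSR⟩ := hS.exists_pos_norm_le
  set δ := ε / (2 * (R + 1))
  have hδ : 0 < δ := by positivity
  obtain ⟨t, -, hKt⟩ := hK.elim_nhds_subcover (fun x => Metric.ball x δ)
    fun x _ => Metric.ball_mem_nhds x hδ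
  obtain ⟨u, hu, ht⟩ := hfin t (ε / 2) (half_pos hε)
  refine ⟨u, hu, fun x hx => ?_⟩
  obtain ⟨y, hy, hxy⟩ := mem_iUnion₂.mp (hKt hx)
  calc ‖u x - x‖ < (‖u‖ + 1) * δ + ε / 2 := norm_apply_sub_self_lt_of_dist_lt hxy (ht y hy)
    _ ≤ (R + 1) * δ + ε / 2 := by gcongr; exact hSR u hu
    _ = ε := by simp only [δ]; field_simp; ring

end

theorem bcap_of_compact_brai_general (X : Type u) [NormedAddCommGroup X] [NormedSpace ℝ X]
    (l : ℝ) (h : CompactAlgHasBRAI X l) : HasBCAP X l := by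
  obtain ⟨ι, _, hne, hdir, e, he, hlim⟩ := h
  have : (atTop : Filter ι).NeBot := atTop_neBot_iff.mpr ⟨hne, hdir⟩
  set S := {u : X →L[ℝ] X | CompactOp u ∧ ‖u‖ ≤ l}
  have hweak : ∀ (f : StrongDual ℝ X) x, Tendsto (fun i => f (e i x)) atTop (𝓝 (f x)) :=
    fun f x => tendsto_dual_apply_of_tendsto_smulRight_comp f x
      (hlim _ (compactOp_smulRight f x))
  have hconv : convexHull ℝ (range e) ⊆ S :=
    convexHull_min (range_subset_iff.2 he) (convex_setOf_compactOp_norm_le l)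
  have hbdd : IsBounded S :=
    (Metric.isBounded_closedBall (x := 0) (r := l)).subset fun u hu =>
      mem_closedBall_zero_iff.2 hu.2
  intro K hK ε hε
  obtain ⟨u, hu, hKu⟩ := approxIdOn_of_isCompact hbdd
    (fun s => (approxIdOn_convexHull_range_of_tendsto_dual hweak s).mono hconv) hK ε hε
  exact ⟨u, hu.1, hu.2, hKu⟩

/-- If 𝒦(X) has a λ-BRAI then `X` has λ-BCAP. -/
theorem bcap_of_compact_brai (X : Type u) [NormedAddCommGroup X] [NormedSpace ℝ X]
    [CompleteSpace X] (l : ℝ) (hl : 1 ≤ l)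
    (h : CompactAlgHasBRAI X l) : HasBCAP X l :=
  bcap_of_compact_brai_general X l h
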